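/- Consider a network of pipe segments, where each segment (i,j) obeys L_ij·(ρ_i' + ρ_j') = −4φ⁻_ij, and where nodal balance holds at every junction with zero net external injection. Then the total line-pack Σ_(i,j) (L_ij A_ij/2)(ρ_i + ρ_j) is constant in time. -/

import Mathlib

/-! Differentiating the line-pack and using the segment mass balance turns its time derivative
into Σ_e A_e (φin_e - φout_e). Grouping the inlet terms by tail node and the outlet terms by
head node, nodal balance makes the two sums agree, so the derivative vanishes identically. -/

open Finset

theorem Finset.sum_eq_sum_of_fiberwise_sum_eq {α β M : Type*} [DecidableEq β] [AddCommMonoid M]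
    (E : Finset α) (f g : α → β) (u v : α → M)
    (h : ∀ b, ∑ e ∈ E.filter (fun e => f e = b), u e = ∑ e ∈ E.filter (fun e => g e = b), v e) :
    ∑ e ∈ E, u e = ∑ e ∈ E, v e := by
  let S := E.image f ∪ E.image g
  rw [← sum_fiberwise_of_maps_to (t := S) (g := f)
      fun e he => mem_union_left _ (mem_image_of_mem f he),
    ← sum_fiberwise_of_maps_to (t := S) (g := g)
      fun e he => mem_union_right _ (mem_image_of_mem g he)]
  exact sum_congr rfl fun b _ => h b

theorem stmt_10_general {ι : Type*} [DecidableEq ι]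
    (E : Finset (ι × ι))
    (ρ r : ι → ℝ → ℝ) (φin φout : ι × ι → ℝ → ℝ) (A L : ι × ι → ℝ)
    (hderiv : ∀ i, ∀ t, HasDerivAt (ρ i) (r i t) t)
    (hmass : ∀ e ∈ E, ∀ t,
      L e * (r e.1 t + r e.2 t) = -4 * ((φout e t - φin e t) / 2))
    (hnodal : ∀ i : ι, ∀ t : ℝ,
      ∑ e ∈ E.filter (fun e => e.1 = i), A e * φin e t =
      ∑ e ∈ E.filter (fun e => e.2 = i), A e * φout e t) :
    ∀ t₁ t₂ : ℝ,
      ∑ e ∈ E, (L e * A e / 2) * (ρ e.1 t₁ + ρ e.2 t₁) =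
      ∑ e ∈ E, (L e * A e / 2) * (ρ e.1 t₂ + ρ e.2 t₂) := by
  have hflux (t : ℝ) : ∑ e ∈ E, A e * φin e t = ∑ e ∈ E, A e * φout e t :=
    E.sum_eq_sum_of_fiberwise_sum_eq Prod.fst Prod.snd _ _ (hnodal · t)
  have hlinepack (t : ℝ) :
      HasDerivAt (fun t => ∑ e ∈ E, (L e * A e / 2) * (ρ e.1 t + ρ e.2 t)) 0 t := by
    have hrate : ∑ e ∈ E, (L e * A e / 2) * (r e.1 t + r e.2 t) = 0 :=
      calc _ = ∑ e ∈ E, (A e * φin e t - A e * φout e t) :=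
            sum_congr rfl fun e he => by linear_combination (A e / 2) * hmass e he t
        _ = 0 := by rw [sum_sub_distrib, hflux t, sub_self]
    rw [← hrate]
    exact HasDerivAt.fun_sum fun e _ => ((hderiv e.1 t).add (hderiv e.2 t)).const_mul _
  exact is_const_of_deriv_eq_zero (fun t => (hlinepack t).differentiableAt)
    (fun t => (hlinepack t).deriv)

/-- For a network of pipe segments obeying the discretized mass balance, with
nodal balance and zero net external injection at every junction, the total
line-pack Σ (L_ij A_ij/2)(ρ_i + ρ_j) is constant in time. -/
theorem stmt_10 {ι : Type*} [Fintype ι] [DecidableEq ι]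
    (E : Finset (ι × ι))
    (ρ r : ι → ℝ → ℝ) (φin φout : ι × ι → ℝ → ℝ) (A L : ι × ι → ℝ)
    (hA : ∀ e ∈ E, 0 < A e) (hL : ∀ e ∈ E, 0 < L e)
    (hderiv : ∀ i, ∀ t, HasDerivAt (ρ i) (r i t) t)
    (hmass : ∀ e ∈ E, ∀ t,
      L e * (r e.1 t + r e.2 t) = -4 * ((φout e t - φin e t) / 2))
    (hnodal : ∀ i : ι, ∀ t : ℝ,
      ∑ e ∈ E.filter (fun e => e.1 = i), A e * φin e t =
      ∑ e ∈ E.filter (fun e => e.2 = i), A e * φout e t) :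
    ∀ t₁ t₂ : ℝ,
      ∑ e ∈ E, (L e * A e / 2) * (ρ e.1 t₁ + ρ e.2 t₁) =
      ∑ e ∈ E, (L e * A e / 2) * (ρ e.1 t₂ + ρ e.2 t₂) :=
  stmt_10_general E ρ r φin φout A L hderiv hmass hnodal
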